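/- arXiv:2408.13059 — 3 statements merged into one kernel-verified Lean document; each statement's English description precedes it below -/
import Mathlib

section
/- Let p : E → X be a local homeomorphism over a profinite space X, and suppose p admits a distinguished continuous global section o : X → E. Given finitely many distinct points x₁,…,xₙ ∈ X and points aᵢ ∈ p⁻¹(xᵢ), there exists a continuous global section s : X → E with s(xᵢ) = aᵢ for all i. -/
/-- over a profinite space, a local homeomorphism admitting a
continuous global section has global sections through any finite set of
prescribed points in distinct fibres. -/
theorem global_section_through_finitely_many_points
    {E X : Type*} [TopologicalSpace E] [TopologicalSpace X]
    [CompactSpace X] [T2Space X] [TotallyDisconnectedSpace X]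
    (p : E → X) (hp : IsLocalHomeomorph p)
    (o : X → E) (ho : Continuous o) (hpo : ∀ x, p (o x) = x)
    (n : ℕ) (x : Fin n → X) (hx : Function.Injective x)
    (a : Fin n → E) (ha : ∀ i, p (a i) = x i) :
    ∃ s : X → E, Continuous s ∧ (∀ y, p (s y) = y) ∧ ∀ i, s (x i) = a i := by
  classical
  -- choose local homeomorphisms through each a i
  choose e he hpe using fun i => hp (a i)
  have hxt : ∀ i, x i ∈ (e i).target := by
    intro i
    have : p (a i) ∈ (e i).target := by
      rw [hpe i]; exact (e i).map_source (he i)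
    rwa [ha i] at this
  -- open neighbourhood of x i inside the target, avoiding the other marked points
  set W : Fin n → Set X := fun i => (e i).target ∩ ⋂ j, ⋂ (_ : j ≠ i), {x j}ᶜ with hW
  have hWopen : ∀ i, IsOpen (W i) :=
    fun i => (e i).open_target.inter <| isOpen_iInter_of_finite fun j =>
      isOpen_iInter_of_finite fun _ => isOpen_compl_singleton
  have hxW : ∀ i, x i ∈ W i := by
    intro i
    refine ⟨hxt i, ?_⟩
    simp only [Set.mem_iInter, Set.mem_compl_iff, Set.mem_singleton_iff]
    intro j hj h
    exact hj (hx h).symm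
  -- choose clopen neighbourhoods inside the W i
  choose U hU hxU hUW using fun i => compact_exists_isClopen_in_isOpen (hWopen i) (hxW i)
  -- disjointify
  set V : Fin n → Set X := fun i => U i \ ⋃ j, ⋃ (_ : j < i), U j with hV
  have hVclopen : ∀ i, IsClopen (V i) := by
    intro i
    exact (hU i).diff (isClopen_iUnion_of_finite fun j =>
      isClopen_iUnion_of_finite fun _ => hU j)
  have hxV : ∀ i, x i ∈ V i := by
    intro i
    refine ⟨hxU i, ?_⟩
    simp only [Set.mem_iUnion, not_exists]
    intro j hj hmem
    have := (hUW j hmem).2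
    simp only [Set.mem_iInter, Set.mem_compl_iff, Set.mem_singleton_iff] at this
    exact this i hj.ne' rfl
  have hVdisj : ∀ i j, i ≠ j → Disjoint (V i) (V j) := by
    intro i j hij
    rcases hij.lt_or_gt with h | h
    · refine Set.disjoint_left.2 fun y hyi hyj => ?_
      exact hyj.2 (Set.mem_iUnion.2 ⟨i, Set.mem_iUnion.2 ⟨h, hyi.1⟩⟩)
    · refine Set.disjoint_left.2 fun y hyi hyj => ?_
      exact hyi.2 (Set.mem_iUnion.2 ⟨j, Set.mem_iUnion.2 ⟨h, hyj.1⟩⟩)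
  -- the glued section
  set s : X → E := fun y => if h : ∃ i, y ∈ V i then (e h.choose).symm y else o y with hs
  have hsV : ∀ i y, y ∈ V i → s y = (e i).symm y := by
    intro i y hy
    have h : ∃ i, y ∈ V i := ⟨i, hy⟩
    have hch : h.choose = i := by
      by_contra hne
      exact (hVdisj _ _ hne).le_bot ⟨h.choose_spec, hy⟩ |>.elim
    simp only [hs, dif_pos h, hch]
  have hsout : ∀ y, (¬ ∃ i, y ∈ V i) → s y = o y := by
    intro y h; simp only [hs, dif_neg h]
  have hVtarget : ∀ i, V i ⊆ (e i).target :=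
    fun i y hy => (hUW i hy.1).1
  refine ⟨s, ?_, ?_, ?_⟩
  · -- continuity
    rw [continuous_iff_continuousAt]
    intro y
    by_cases h : ∃ i, y ∈ V i
    · obtain ⟨i, hi⟩ := h
      have hnhds : V i ∈ nhds y := (hVclopen i).2.mem_nhds hi
      have hcont : ContinuousAt (e i).symm y :=
        (e i).continuousOn_symm.continuousAt ((e i).open_target.mem_nhds (hVtarget i hi))
      exact hcont.congr (Filter.eventuallyEq_of_mem hnhds fun z hz => (hsV i z hz).symm)
    · have hopen : IsOpen (⋃ i, V i)ᶜ :=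
        (isClosed_iUnion_of_finite fun i => (hVclopen i).1).isOpen_compl
      have hy : y ∈ (⋃ i, V i)ᶜ := by simpa using h
      refine ho.continuousAt.congr (Filter.eventuallyEq_of_mem (hopen.mem_nhds hy) ?_)
      intro z hz
      exact (hsout z (by simpa using hz)).symm
  · -- section property
    intro y
    by_cases h : ∃ i, y ∈ V i
    · obtain ⟨i, hi⟩ := h
      rw [hsV i y hi, hpe i]
      exact (e i).right_inv (hVtarget i hi)
    · rw [hsout y h]; exact hpo y
  · -- interpolation
    intro i
    rw [hsV i (x i) (hxV i), ← ha i, hpe i]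
    exact (e i).left_inv (he i)
end

section
/- Let p : E → X be a local homeomorphism over a profinite space X admitting a continuous global section o : X → E. Then the natural map from the set of continuous global sections of p to the product ∏_{x∈X} p⁻¹(x) (with the product of discrete topologies) has dense image. -/
private lemma exists_section_matching
    {E X : Type*} [TopologicalSpace E] [TopologicalSpace X]
    [CompactSpace X] [T2Space X] [TotallyDisconnectedSpace X]
    (p : E → X) (hp : IsLocalHomeomorph p)
    (o : X → E) (ho : Continuous o) (hpo : ∀ x, p (o x) = x)
    (f : ∀ x : X, {e : E // p e = x}) (F : Finset X) :
    ∃ s : X → E, Continuous s ∧ (∀ x, p (s x) = x) ∧ ∀ x ∈ F, s x = (f x).val := by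
  classical
  induction F using Finset.induction_on with
  | empty => exact ⟨o, ho, hpo, by simp⟩
  | @insert a F ha ih =>
    obtain ⟨s, hs, hps, hsF⟩ := ih
    obtain ⟨φ, hmem, hφ⟩ := hp (f a).val
    have hfa : φ (f a).val = a := by rw [← hφ]; exact (f a).property
    have haT : a ∈ φ.target := hfa ▸ φ.map_source hmem
    have hFc : IsOpen ((F : Set X)ᶜ) := F.finite_toSet.isClosed.isOpen_compl
    obtain ⟨C, hC, haC, hCsub⟩ :=
      compact_exists_isClopen_in_isOpen (φ.open_target.inter hFc) ⟨haT, ha⟩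
    refine ⟨fun z => if z ∈ C then φ.symm z else s z, ?_, ?_, ?_⟩
    · rw [continuous_iff_continuousAt]
      intro z
      by_cases hz : z ∈ C
      · refine (φ.symm.continuousAt (by simpa using (hCsub hz).1)).congr ?_
        exact Filter.eventually_of_mem (hC.isOpen.mem_nhds hz) fun w hw => (if_pos hw).symm
      · refine (hs.continuousAt).congr ?_
        exact Filter.eventually_of_mem (hC.isClosed.isOpen_compl.mem_nhds hz)
          fun w hw => (if_neg hw).symm
    · intro z
      by_cases hz : z ∈ C
      · simp only [if_pos hz]
        rw [hφ]
        exact φ.right_inv (hCsub hz).1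
      · simp only [if_neg hz]; exact hps z
    · intro x hx
      rcases Finset.mem_insert.mp hx with rfl | hx'
      · have h2 := φ.left_inv hmem
        rw [hfa] at h2
        simp [if_pos haC, h2]
      · have hxC : x ∉ C := fun h => (hCsub h).2 hx'
        simp only [if_neg hxC]
        exact hsF x hx'

/-- the continuous global sections of a local homeomorphism over a
profinite space (admitting a global section) are dense in the product of the
fibres, each fibre carrying the discrete topology. -/
theorem global_sections_dense_in_product_of_fibres
    {E X : Type*} [TopologicalSpace E] [TopologicalSpace X]
    [CompactSpace X] [T2Space X] [TotallyDisconnectedSpace X]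
    (p : E → X) (hp : IsLocalHomeomorph p)
    (o : X → E) (ho : Continuous o) (hpo : ∀ x, p (o x) = x) :
    @Dense (∀ x : X, {e : E // p e = x})
      (@Pi.topologicalSpace X (fun x => {e : E // p e = x}) (fun _ => ⊥))
      (Set.range (fun s : {s : X → E // Continuous s ∧ ∀ x, p (s x) = x} =>
        fun x : X => (⟨s.val x, s.property.2 x⟩ : {e : E // p e = x}))) := by
  letI : ∀ x : X, TopologicalSpace {e : E // p e = x} := fun _ => ⊥
  rw [dense_iff_inter_open]
  rintro U hU ⟨f, hf⟩
  obtain ⟨I, u, hu, hsub⟩ := isOpen_pi_iff.mp hU f hf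
  obtain ⟨s, hs, hps, hsF⟩ := exists_section_matching p hp o ho hpo f I
  refine ⟨fun x => ⟨s x, hps x⟩, hsub ?_, ⟨⟨s, hs, hps⟩, rfl⟩⟩
  intro x hx
  exact Set.mem_of_eq_of_mem (Subtype.ext (hsF x hx)) (hu x hx).2
end

section
/- Let R be a profinite ring with 1, X a profinite space, and (𝒜, p, X) an étale space of R-modules: p : 𝒜 → X is a local homeomorphism, with a continuous zero section o : X → 𝒜, continuous fibrewise addition α : 𝒜 ×_X 𝒜 → 𝒜, and continuous scalar action ρ : 𝒜 × R → 𝒜, making each fibre A_x a discrete R-module. Then for every continuous global section s : X → 𝒜, the annihilator ideal I = {r ∈ R | s(x)·r = o(x) for all x ∈ X} is an open right ideal of R. -/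
/-- for an étale space of (right) modules over a profinite ring `R`
with `1`, the annihilator of any continuous global section is an open right
ideal of `R`. -/
theorem annihilator_of_global_section_isOpen
    {R : Type*} [Ring R] [TopologicalSpace R] [IsTopologicalRing R]
    [CompactSpace R] [T2Space R] [TotallyDisconnectedSpace R]
    {X E : Type*} [TopologicalSpace X] [TopologicalSpace E]
    [CompactSpace X] [T2Space X] [TotallyDisconnectedSpace X]
    (p : E → X) (hp : IsLocalHomeomorph p)
    -- the zero section
    (o : X → E) (ho : Continuous o) (hpo : ∀ x, p (o x) = x)
    -- fibrewise addition, continuous on the fibre product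
    (α : E → E → E)
    (hα : Continuous fun q : {q : E × E // p q.1 = p q.2} => α q.val.1 q.val.2)
    (hpα : ∀ e f, p e = p f → p (α e f) = p e)
    -- continuous scalar action
    (ρ : E × R → E) (hρ : Continuous ρ) (hpρ : ∀ e r, p (ρ (e, r)) = p e)
    -- fibrewise right-module axioms
    (hadd_assoc : ∀ e f g, p e = p f → p f = p g → α (α e f) g = α e (α f g))
    (hadd_comm : ∀ e f, p e = p f → α e f = α f e)
    (hzero_add : ∀ e, α (o (p e)) e = e)
    (hneg : ∀ e, ∃ e', p e' = p e ∧ α e e' = o (p e))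
    (hsmul_add : ∀ e f r, p e = p f → ρ (α e f, r) = α (ρ (e, r)) (ρ (f, r)))
    (hadd_smul : ∀ e r r', ρ (e, r + r') = α (ρ (e, r)) (ρ (e, r')))
    (hmul_smul : ∀ e r r', ρ (e, r * r') = ρ (ρ (e, r), r'))
    (hone_smul : ∀ e, ρ (e, 1) = e)
    (hzero_smul : ∀ x r, ρ (o x, r) = o x)
    -- a continuous global section
    (s : X → E) (hs : Continuous s) (hps : ∀ x, p (s x) = x) :
    IsOpen {r : R | ∀ x, ρ (s x, r) = o x} ∧
    (0 : R) ∈ {r : R | ∀ x, ρ (s x, r) = o x} ∧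
    (∀ r r', (∀ x, ρ (s x, r) = o x) → (∀ x, ρ (s x, r') = o x) →
      ∀ x, ρ (s x, r + r') = o x) ∧
    (∀ r t, (∀ x, ρ (s x, r) = o x) → ∀ x, ρ (s x, r * t) = o x) := by

  have hrange : IsOpen (Set.range o) := by
    refine (hp.isOpenEmbedding_of_comp ?_ ho).isOpen_range
    have : p ∘ o = id := funext hpo
    rw [this]; exact Topology.IsOpenEmbedding.id
  have hmem : ∀ x r, ρ (s x, r) = o x ↔ ρ (s x, r) ∈ Set.range o := by
    intro x r
    constructor
    · intro h; exact ⟨x, h.symm⟩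
    · rintro ⟨x', hx'⟩
      have h1 : p (ρ (s x, r)) = x := by rw [hpρ, hps]
      have h2 : x' = x := by rw [← hpo x', hx', h1]
      rw [← hx', h2]
  refine ⟨?_, ?_, ?_, ?_⟩
  · have hF : Continuous (fun q : X × R => ρ (s q.1, q.2)) :=
      hρ.comp ((hs.comp continuous_fst).prodMk continuous_snd)
    have hC : IsClosed {q : X × R | ρ (s q.1, q.2) ∉ Set.range o} := by
      have := (hF.isOpen_preimage _ hrange).isClosed_compl
      simpa [Set.preimage, Set.compl_setOf] using this
    have himg : IsClosed (Prod.snd '' {q : X × R | ρ (s q.1, q.2) ∉ Set.range o}) :=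
      isClosedMap_snd_of_compactSpace _ hC
    have heq : {r : R | ∀ x, ρ (s x, r) = o x} =
        (Prod.snd '' {q : X × R | ρ (s q.1, q.2) ∉ Set.range o})ᶜ := by
      ext r
      simp only [Set.mem_setOf_eq, Set.mem_compl_iff]
      constructor
      · rintro h ⟨⟨x, r0⟩, hmem', rfl⟩
        exact hmem' ((hmem x r0).mp (h x))
      · intro h x
        rw [hmem x r]
        by_contra hc
        exact h ⟨(x, r), hc, rfl⟩
    rw [heq]
    exact himg.isOpen_compl
  · intro x
    have := hadd_smul (s x) 0 0
    rw [add_zero] at this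
    -- ρ (s x, 0) = α (ρ (s x,0)) (ρ (s x,0)); cancel using negation
    set e := ρ (s x, (0 : R)) with he
    have hpe : p e = x := by rw [he, hpρ, hps]
    obtain ⟨e', hpe', hee'⟩ := hneg e
    have h2 : α (α e e) e' = α e (α e e') := hadd_assoc e e e' (rfl) (by rw [hpe'])
    rw [hee', ← this, hee'] at h2
    have h3 : α e (o (p e)) = e := by rw [hadd_comm e (o (p e)) (by rw [hpo]), hzero_add]
    rw [h3] at h2
    rw [show x = p e from hpe.symm]
    exact h2.symm
  · intro r r' h h' x
    rw [hadd_smul, h x, h' x]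
    have := hzero_add (o x)
    rwa [hpo] at this
  · intro r t h x
    rw [hmul_smul, h x, hzero_smul]
end
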